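/- arXiv:1403.1988 — 9 statements merged into one kernel-verified Lean document; each statement's English description precedes it below -/
import Mathlib

section
/- Let F : ℕ → ℝ satisfy F(0) = 0 and, for all n ≥ 1, F(n) = 1 + (1/n)·Σ_{k=1}^{n} (H_{k−1} + H_{n−k}). Then for all n ≥ 1, F(n) = 2·H_n − 1; in particular F(n)/ln n → 2 as n → ∞. -/
open Finset Filter

/-- The `n`-th harmonic number `H_n = ∑_{k=1}^n 1/k`, with `H 0 = 0`. -/
noncomputable def H (n : ℕ) : ℝ := ∑ k ∈ Finset.Icc 1 n, (1 : ℝ) / k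

lemma Icc_to_range (f : ℕ → ℝ) (n : ℕ) :
    ∑ k ∈ Finset.Icc 1 n, f k = ∑ j ∈ Finset.range n, f (j + 1) := by
  rw [← Finset.Ico_add_one_right_eq_Icc, Finset.sum_Ico_eq_sum_range]
  simp [add_comm]

lemma H_eq_range (n : ℕ) : H n = ∑ j ∈ Finset.range n, (1 : ℝ) / (j + 1) := by
  unfold H
  rw [Icc_to_range]
  push_cast
  rfl

lemma H_succ (n : ℕ) : H (n + 1) = H n + 1 / (n + 1) := by
  unfold H
  rw [Finset.sum_Icc_succ_top (by omega)]
  push_cast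
  ring

lemma sum_H_range (n : ℕ) : ∑ j ∈ Finset.range n, H j = n * H n - n := by
  induction n with
  | zero => simp [H]
  | succ n ih =>
    rw [Finset.sum_range_succ, ih, H_succ]
    push_cast
    field_simp
    ring

lemma H_eq_harmonic (n : ℕ) : H n = (harmonic n : ℝ) := by
  rw [H_eq_range, harmonic]
  push_cast
  simp [one_div]

theorem stmt_1 (F : ℕ → ℝ) (hF0 : F 0 = 0)
    (hrec : ∀ n : ℕ, 1 ≤ n →
      F n = 1 + (1 / (n : ℝ)) * ∑ k ∈ Finset.Icc 1 n, (H (k - 1) + H (n - k))) :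
    (∀ n : ℕ, 1 ≤ n → F n = 2 * H n - 1) ∧
    Tendsto (fun n : ℕ => F n / Real.log n) atTop (nhds 2) := by
  have key : ∀ n : ℕ, 1 ≤ n → F n = 2 * H n - 1 := by
    intro n hn
    have h1 : ∑ k ∈ Finset.Icc 1 n, H (k - 1) = ∑ j ∈ Finset.range n, H j := by
      rw [Icc_to_range]
      simp only [Nat.add_sub_cancel]
    have h2 : ∑ k ∈ Finset.Icc 1 n, H (n - k) = ∑ j ∈ Finset.range n, H j := by
      rw [Icc_to_range]
      rw [← Finset.sum_range_reflect]
      apply Finset.sum_congr rfl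
      intro j hj
      simp only [Finset.mem_range] at hj
      congr 1
      omega
    rw [hrec n hn, Finset.sum_add_distrib, h1, h2, sum_H_range]
    have hn' : (n : ℝ) ≠ 0 := by positivity
    field_simp
    ring
  refine ⟨key, ?_⟩
  have hlog : Tendsto (fun n : ℕ => Real.log n) atTop atTop :=
    Real.tendsto_log_atTop.comp tendsto_natCast_atTop_atTop
  have hH : Tendsto (fun n : ℕ => H n - Real.log n) atTop
      (nhds Real.eulerMascheroniConstant) := by
    apply Real.tendsto_harmonic_sub_log.congr
    intro n; rw [H_eq_harmonic]
  have : Tendsto (fun n : ℕ => 2 * ((H n - Real.log n) / Real.log n) + 2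
      - 1 / Real.log n) atTop (nhds 2) := by
    have t1 : Tendsto (fun n : ℕ => (H n - Real.log n) / Real.log n) atTop (nhds 0) :=
      hH.div_atTop hlog
    have t2 : Tendsto (fun n : ℕ => 1 / Real.log n) atTop (nhds 0) :=
      tendsto_const_nhds.div_atTop hlog
    have := ((t1.const_mul 2).add_const 2).sub t2
    simpa using this
  apply this.congr'
  filter_upwards [eventually_ge_atTop 2] with n hn
  have hl : Real.log n ≠ 0 := by
    have : (1:ℝ) < n := by exact_mod_cast by omega
    exact ne_of_gt (Real.log_pos this)
  rw [key n (by omega)]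
  field_simp
  ring
end

section
/- Fix 0 < p < 1. Let E : ℕ → ℝ satisfy E(0) = 0 and, for all n ≥ 1, E(n) = 1 + p·E(n−1) + ((1−p)/n)·Σ_{k=1}^{n} E(k−1). Then for all n ≥ 1, E(n) = Σ_{k=1}^{n} (1 − p^k)/(k·(1−p)). -/
/-!
Clearing the denominator, the recurrence reads
`(n + 1) E (n + 1) = (n + 1) + p (n + 1) E n + (1 - p) ∑_{k ≤ n} E k`. Subtracting two consecutive
instances eliminates the sum: the scaled increments `d n = (n + 1) (E (n + 1) - E n)` satisfy
`d (n + 1) = 1 + p d n` and `d 0 = 1`, so `d n = 1 + p + ⋯ + p ^ n = (1 - p ^ (n + 1)) / (1 - p)`.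
Telescoping then gives `E n = ∑_{k < n} d k / (k + 1)`.
-/

open Finset

theorem Finset.sum_Icc_one_eq_sum_range {M : Type*} [AddCommMonoid M] (f : ℕ → M) (n : ℕ) :
    ∑ k ∈ Icc 1 n, f k = ∑ k ∈ range n, f (k + 1) := by
  rw [← Ico_add_one_right_eq_Icc, sum_Ico_eq_sum_range, Nat.add_sub_cancel]
  simp only [add_comm]

section

variable {K : Type*} [Field K] {p : K} {E : ℕ → K}

theorem succ_mul_sub_eq_geom_sum
    (hrec : ∀ n : ℕ, (n + 1 : K) * E (n + 1) =
      (n + 1) + p * (n + 1) * E n + (1 - p) * ∑ k ∈ range (n + 1), E k) (n : ℕ) :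
    (n + 1 : K) * (E (n + 1) - E n) = ∑ i ∈ range (n + 1), p ^ i := by
  induction n with
  | zero =>
    have h₀ := hrec 0
    simp only [Nat.cast_zero, zero_add, range_one, sum_singleton] at h₀ ⊢
    linear_combination h₀
  | succ n ih =>
    have h₁ := hrec (n + 1)
    rw [sum_range_succ] at h₁
    rw [geom_sum_succ, ← ih]
    push_cast at h₁ ⊢
    linear_combination h₁ - hrec n

theorem eq_add_sum_geom_sum_div [CharZero K]
    (hrec : ∀ n : ℕ, (n + 1 : K) * E (n + 1) =
      (n + 1) + p * (n + 1) * E n + (1 - p) * ∑ k ∈ range (n + 1), E k) (n : ℕ) :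
    E n = E 0 + ∑ k ∈ range n, (∑ i ∈ range (k + 1), p ^ i) / (k + 1) := by
  refine eq_add_of_sub_eq' ?_
  rw [← sum_range_sub]
  refine sum_congr rfl fun k _ => ?_
  rw [← succ_mul_sub_eq_geom_sum hrec, mul_div_cancel_left₀ _ (Nat.cast_add_one_ne_zero k)]

end

theorem stmt_2_general (p : ℝ) (hp1 : p < 1) (E : ℕ → ℝ) (hE0 : E 0 = 0)
    (hrec : ∀ n : ℕ, 1 ≤ n →
      E n = 1 + p * E (n - 1) + ((1 - p) / (n : ℝ)) * ∑ k ∈ Finset.Icc 1 n, E (k - 1)) :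
    ∀ n : ℕ, 1 ≤ n →
      E n = ∑ k ∈ Finset.Icc 1 n, (1 - p ^ k) / ((k : ℝ) * (1 - p)) := by
  have hrec' : ∀ n : ℕ, (n + 1 : ℝ) * E (n + 1) =
      (n + 1) + p * (n + 1) * E n + (1 - p) * ∑ k ∈ range (n + 1), E k := by
    intro n
    have h := hrec (n + 1) n.succ_pos
    rw [sum_Icc_one_eq_sum_range] at h
    simp only [Nat.add_sub_cancel, Nat.cast_add_one] at h
    rw [h]
    field_simp
  intro n _
  rw [eq_add_sum_geom_sum_div hrec' n, hE0, zero_add, sum_Icc_one_eq_sum_range]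
  refine sum_congr rfl fun k _ => ?_
  have hp : p - 1 ≠ 0 := sub_ne_zero.mpr hp1.ne
  have hp' : 1 - p ≠ 0 := sub_ne_zero.mpr hp1.ne'
  rw [geom_sum_eq hp1.ne, Nat.cast_add_one]
  field_simp
  ring

theorem stmt_2 (p : ℝ) (hp0 : 0 < p) (hp1 : p < 1) (E : ℕ → ℝ) (hE0 : E 0 = 0)
    (hrec : ∀ n : ℕ, 1 ≤ n →
      E n = 1 + p * E (n - 1) + ((1 - p) / (n : ℝ)) * ∑ k ∈ Finset.Icc 1 n, E (k - 1)) :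
    ∀ n : ℕ, 1 ≤ n →
      E n = ∑ k ∈ Finset.Icc 1 n, (1 - p ^ k) / ((k : ℝ) * (1 - p)) :=
  stmt_2_general p hp1 E hE0 hrec
end

section
/- Fix 0 < p < 1 and let E : ℕ → ℝ satisfy E(0) = 0 and, for all n ≥ 1, E(n) = 1 + p·E(n−1) + ((1−p)/n)·Σ_{k=1}^{n} E(k−1). Let F : ℕ → ℝ satisfy F(0) = 0 and, for all n ≥ 1, F(n) = 1 + p·F(n−1) + ((1−p)/n)·Σ_{k=1}^{n} (E(n−k) + E(k−1)). Then for all n ≥ 1, F(n) = −(1 − p^n)/(1−p) + 2·Σ_{k=1}^{n} (1 − p^k)/(k·(1−p)). -/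
open Finset

theorem stmt_4 (p : ℝ) (hp0 : 0 < p) (hp1 : p < 1)
    (E F : ℕ → ℝ) (hE0 : E 0 = 0)
    (hErec : ∀ n : ℕ, 1 ≤ n →
      E n = 1 + p * E (n - 1) + ((1 - p) / (n : ℝ)) * ∑ k ∈ Finset.Icc 1 n, E (k - 1))
    (hF0 : F 0 = 0)
    (hFrec : ∀ n : ℕ, 1 ≤ n →
      F n = 1 + p * F (n - 1) +
        ((1 - p) / (n : ℝ)) * ∑ k ∈ Finset.Icc 1 n, (E (n - k) + E (k - 1))) :
    ∀ n : ℕ, 1 ≤ n →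
      F n = -(1 - p ^ n) / (1 - p) +
        2 * ∑ k ∈ Finset.Icc 1 n, (1 - p ^ k) / ((k : ℝ) * (1 - p)) := by
  have hne : (1 : ℝ) - p ≠ 0 := by linarith
  set e : ℕ → ℝ := fun n => ∑ k ∈ Finset.Icc 1 n, (1 - p ^ k) / ((k : ℝ) * (1 - p)) with he
  have he0 : e 0 = 0 := by simp [he]
  have hstep : ∀ m : ℕ, e (m + 1) = e m + (1 - p ^ (m + 1)) / (((m : ℝ) + 1) * (1 - p)) := by
    intro m
    have h := Finset.sum_Icc_succ_top (f := fun k => (1 - p ^ k) / ((k : ℝ) * (1 - p)))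
      (a := 1) (b := m) (by omega)
    simp only [he, h]
    push_cast
    ring
  have hstep' : ∀ m : ℕ, ((m : ℝ) + 1) * (1 - p) * e (m + 1) =
      ((m : ℝ) + 1) * (1 - p) * e m + (1 - p ^ (m + 1)) := by
    intro m
    have hm1 : ((m : ℝ) + 1) ≠ 0 := by positivity
    rw [hstep m]
    field_simp
  -- geometric sum fact
  have hG : ∀ m : ℕ, (1 - p) * ((m : ℝ) + 1 - ∑ k ∈ Finset.Icc 1 m, (1 - p ^ k)) = 1 - p ^ (m + 1) := by
    intro m
    induction m with
    | zero => norm_num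
    | succ m ih =>
      rw [Finset.sum_Icc_succ_top (by omega)]
      push_cast
      push_cast at ih
      linear_combination ih
  have hT : ∀ m : ℕ, ∑ k ∈ Finset.Icc 1 m, (1 - p ^ k) =
      (m : ℝ) + 1 - (1 - p ^ (m + 1)) / (1 - p) := by
    intro m
    have h : ((m : ℝ) + 1 - ∑ k ∈ Finset.Icc 1 m, (1 - p ^ k)) = (1 - p ^ (m + 1)) / (1 - p) := by
      rw [eq_div_iff hne]
      linear_combination hG m
    linarith [h]
  -- sum of e
  have hS : ∀ m : ℕ, (1 - p) * ∑ j ∈ Finset.range (m + 1), e j =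
      ((m : ℝ) + 1) * (1 - p) * e m - ∑ k ∈ Finset.Icc 1 m, (1 - p ^ k) := by
    intro m
    induction m with
    | zero => simp [he0]
    | succ m ih =>
      rw [Finset.sum_range_succ, Finset.sum_Icc_succ_top (by omega)]
      push_cast
      push_cast at ih
      linear_combination ih - hstep' m
  -- reindexing lemma
  have hreidx : ∀ (f : ℕ → ℝ) (n : ℕ), ∑ k ∈ Finset.Icc 1 n, f (k - 1) =
      ∑ j ∈ Finset.range n, f j := by
    intro f n
    rw [← Finset.Ico_add_one_right_eq_Icc, Finset.sum_Ico_eq_sum_range]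
    simp
  -- closed form for E
  have heclosed : ∀ n : ℕ, E n = e n := by
    intro n
    induction n using Nat.strong_induction_on with
    | _ n ih =>
      match n with
      | 0 => simpa [he0] using hE0
      | m + 1 =>
        have hr := hErec (m + 1) (by omega)
        have hsum : ∑ k ∈ Finset.Icc 1 (m + 1), E (k - 1) =
            ∑ j ∈ Finset.range (m + 1), e j := by
          rw [hreidx E (m + 1)]
          exact Finset.sum_congr rfl fun j hj => ih j (by simp at hj; omega)
        rw [hsum] at hr
        have hEm : E (m + 1 - 1) = e m := by simpa using ih m (by omega)
        rw [hEm] at hr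
        have hm1 : ((m : ℝ) + 1) ≠ 0 := by positivity
        have hS' := hS m
        rw [hT m] at hS'
        have hSig : ∑ j ∈ Finset.range (m + 1), e j =
            (((m : ℝ) + 1) * (1 - p) * e m - (((m : ℝ) + 1) - (1 - p ^ (m + 1)) / (1 - p))) / (1 - p) := by
          rw [eq_div_iff hne]
          linear_combination hS'
        rw [hSig] at hr
        rw [hr, hstep m]
        push_cast
        field_simp
        ring
  -- closed form for F
  have hFclosed : ∀ n : ℕ, F n = -(1 - p ^ n) / (1 - p) + 2 * e n := by
    intro n
    induction n with
    | zero => simp [hF0, he0]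
    | succ m ih =>
      have hr := hFrec (m + 1) (by omega)
      have hsum1 : ∑ k ∈ Finset.Icc 1 (m + 1), (E (m + 1 - k) + E (k - 1)) =
          2 * ∑ j ∈ Finset.range (m + 1), e j := by
        rw [Finset.sum_add_distrib, hreidx E (m + 1)]
        have hrefl : ∑ k ∈ Finset.Icc 1 (m + 1), E (m + 1 - k) =
            ∑ j ∈ Finset.range (m + 1), E j := by
          rw [← Finset.Ico_add_one_right_eq_Icc, Finset.sum_Ico_eq_sum_range]
          have h1 : ∀ i ∈ Finset.range (m + 1 + 1 - 1), E (m + 1 - (1 + i)) = E (m - i) := by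
            intro i hi; congr 1; omega
          rw [Finset.sum_congr rfl h1]
          simpa using Finset.sum_range_reflect (fun j => E j) (m + 1)
        rw [hrefl]
        rw [show (∑ j ∈ Finset.range (m + 1), E j) = ∑ j ∈ Finset.range (m + 1), e j from
          Finset.sum_congr rfl fun j _ => heclosed j]
        ring
      rw [hsum1] at hr
      have hFm : F (m + 1 - 1) = F m := by norm_num
      rw [hFm, ih] at hr
      have hm1 : ((m : ℝ) + 1) ≠ 0 := by positivity
      have hS' := hS m
      rw [hT m] at hS'
      have hSig : ∑ j ∈ Finset.range (m + 1), e j =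
          (((m : ℝ) + 1) * (1 - p) * e m - (((m : ℝ) + 1) - (1 - p ^ (m + 1)) / (1 - p))) / (1 - p) := by
        rw [eq_div_iff hne]
        linear_combination hS'
      rw [hSig] at hr
      rw [hr, hstep m]
      push_cast
      field_simp
      ring
  intro n _
  exact hFclosed n
end

section
/- Fix 0 < p < 1 and let E : ℕ → ℝ satisfy E(0) = 0 and, for all n ≥ 1, E(n) = 1 + p·E(n−1) + ((1−p)/n)·Σ_{k=1}^{n} E(k−1). Let F : ℕ → ℝ satisfy F(0) = 0 and, for all n ≥ 1, F(n) = 1 + p·F(n−1) + ((1−p)/n)·Σ_{k=1}^{n} (E(n−k) + E(k−1)). Then for all n ≥ 1, F(n) − 2·E(n) = −(1 − p^n)/(1−p). -/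
open Finset

/-- Both sums run over `f 0, …, f (n - 1)`, in opposite orders. -/
theorem Finset.sum_Icc_one_comp_sub_eq {M : Type*} [AddCommMonoid M] (f : ℕ → M) (n : ℕ) :
    ∑ k ∈ Icc 1 n, f (n - k) = ∑ k ∈ Icc 1 n, f (k - 1) :=
  sum_nbij' (fun k => n + 1 - k) (fun k => n + 1 - k)
    (fun k hk => by simp only [mem_Icc] at hk ⊢; omega)
    (fun k hk => by simp only [mem_Icc] at hk ⊢; omega)
    (fun k hk => by simp only [mem_Icc] at hk; omega)
    (fun k hk => by simp only [mem_Icc] at hk; omega)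
    (fun k hk => by simp only [mem_Icc] at hk; congr 1; omega)

theorem eq_mul_geom_sum_of_succ_eq {R : Type*} [CommSemiring R] (c p : R) (d : ℕ → R)
    (h0 : d 0 = 0) (hsucc : ∀ n, d (n + 1) = c + p * d n) (n : ℕ) :
    d n = c * ∑ i ∈ range n, p ^ i := by
  induction n with
  | zero => simp [h0]
  | succ n ih => rw [hsucc, ih, geom_sum_succ]; ring

theorem stmt_6_general (p : ℝ) (hp1 : p < 1)
    (E F : ℕ → ℝ) (hE0 : E 0 = 0)
    (hErec : ∀ n : ℕ, 1 ≤ n →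
      E n = 1 + p * E (n - 1) + ((1 - p) / (n : ℝ)) * ∑ k ∈ Finset.Icc 1 n, E (k - 1))
    (hF0 : F 0 = 0)
    (hFrec : ∀ n : ℕ, 1 ≤ n →
      F n = 1 + p * F (n - 1) +
        ((1 - p) / (n : ℝ)) * ∑ k ∈ Finset.Icc 1 n, (E (n - k) + E (k - 1))) :
    ∀ n : ℕ, 1 ≤ n → F n - 2 * E n = -(1 - p ^ n) / (1 - p) := by
  have hsucc : ∀ n, F (n + 1) - 2 * E (n + 1) = -1 + p * (F n - 2 * E n) := by
    intro n
    rw [hFrec (n + 1) n.succ_pos, hErec (n + 1) n.succ_pos, sum_add_distrib,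
      sum_Icc_one_comp_sub_eq, Nat.add_sub_cancel]
    ring
  intro n _
  rw [eq_mul_geom_sum_of_succ_eq (-1) p (fun n => F n - 2 * E n) (by simp [hE0, hF0]) hsucc,
    geom_sum_eq hp1.ne]
  have hp1' : p - 1 ≠ 0 := sub_ne_zero.mpr hp1.ne
  have hp1'' : 1 - p ≠ 0 := sub_ne_zero.mpr hp1.ne'
  field_simp
  ring

theorem stmt_6 (p : ℝ) (hp0 : 0 < p) (hp1 : p < 1)
    (E F : ℕ → ℝ) (hE0 : E 0 = 0)
    (hErec : ∀ n : ℕ, 1 ≤ n →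
      E n = 1 + p * E (n - 1) + ((1 - p) / (n : ℝ)) * ∑ k ∈ Finset.Icc 1 n, E (k - 1))
    (hF0 : F 0 = 0)
    (hFrec : ∀ n : ℕ, 1 ≤ n →
      F n = 1 + p * F (n - 1) +
        ((1 - p) / (n : ℝ)) * ∑ k ∈ Finset.Icc 1 n, (E (n - k) + E (k - 1))) :
    ∀ n : ℕ, 1 ≤ n → F n - 2 * E n = -(1 - p ^ n) / (1 - p) :=
  stmt_6_general p hp1 E F hE0 hErec hF0 hFrec
end

section
/- Fix 0 ≤ p < 1. Let L : ℕ → ℝ satisfy L(0) = 0 and, for all n ≥ 1, L(n) = 1 + p·L(n−1) + (1−p)·Σ_{k=1}^{n−1} 2^{−k}·L(k−1) + (1−p)·2^{−(n−1)}·L(n−1). Then for all n ≥ 1, L(n) = Σ_{l=1}^{n} Π_{k=1}^{l−1} (p + (1−p)/2^k). -/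
open Finset

theorem stmt_7 (p : ℝ) (hp0 : 0 ≤ p) (hp1 : p < 1) (L : ℕ → ℝ) (hL0 : L 0 = 0)
    (hrec : ∀ n : ℕ, 1 ≤ n →
      L n = 1 + p * L (n - 1) +
        (1 - p) * (∑ k ∈ Finset.Icc 1 (n - 1), (1 / (2 : ℝ) ^ k) * L (k - 1)) +
        (1 - p) * (1 / (2 : ℝ) ^ (n - 1)) * L (n - 1)) :
    ∀ n : ℕ, 1 ≤ n →
      L n = ∑ l ∈ Finset.Icc 1 n, ∏ k ∈ Finset.Icc 1 (l - 1), (p + (1 - p) / 2 ^ k) := by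
  have key : ∀ m : ℕ,
      (L (m + 1) = ∑ l ∈ Finset.Icc 1 (m + 1), ∏ k ∈ Finset.Icc 1 (l - 1),
        (p + (1 - p) / 2 ^ k)) ∧
      L (m + 1) - L m = ∏ k ∈ Finset.Icc 1 m, (p + (1 - p) / 2 ^ k) := by
    intro m
    induction m with
    | zero =>
      have h1 := hrec 1 le_rfl
      simp [hL0] at h1
      constructor
      · simp [h1]
      · simp [h1, hL0]
    | succ m ih =>
      obtain ⟨ihsum, ihdiff⟩ := ih
      have hA := hrec (m + 2) (by omega)
      have hB := hrec (m + 1) (by omega)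
      simp only [Nat.add_sub_cancel, show m + 2 - 1 = m + 1 from rfl] at hA hB
      have hsplit : (∑ k ∈ Finset.Icc 1 (m + 1), (1 / (2 : ℝ) ^ k) * L (k - 1))
          = (∑ k ∈ Finset.Icc 1 m, (1 / (2 : ℝ) ^ k) * L (k - 1))
            + (1 / (2 : ℝ) ^ (m + 1)) * L m := by
        rw [Finset.sum_Icc_succ_top (by omega : (1:ℕ) ≤ m + 1)]
        simp
      have hdiff : L (m + 2) - L (m + 1)
          = (p + (1 - p) / 2 ^ (m + 1)) * (L (m + 1) - L m) := by
        rw [hA, hB, hsplit]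
        have h2 : (2:ℝ) ^ (m+1) ≠ 0 := by positivity
        have h3 : (2:ℝ) ^ m ≠ 0 := by positivity
        field_simp
        ring
      have hprod : (∏ k ∈ Finset.Icc 1 (m + 1), (p + (1 - p) / 2 ^ k))
          = (∏ k ∈ Finset.Icc 1 m, (p + (1 - p) / 2 ^ k))
            * (p + (1 - p) / 2 ^ (m + 1)) := by
        rw [Finset.prod_Icc_succ_top (by omega : (1:ℕ) ≤ m + 1)]
      constructor
      · rw [Finset.sum_Icc_succ_top (by omega : (1:ℕ) ≤ m + 2),
          show m + 2 - 1 = m + 1 from rfl, ← ihsum, hprod, ← ihdiff]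
        linear_combination hdiff
      · rw [hprod, ← ihdiff]
        linear_combination hdiff
  intro n hn
  obtain ⟨m, rfl⟩ := Nat.exists_eq_add_of_le hn
  simpa [Nat.add_comm] using (key m).1
end

section
/- Fix 0 ≤ p < 1 and let T_p = Σ_{l=1}^{∞} Π_{k=1}^{l−1} (p + (1−p)/2^k). This series converges and satisfies 1/(1−p) ≤ T_p ≤ 2/(1−p). -/
open Finset

theorem stmt_8 (p : ℝ) (hp0 : 0 ≤ p) (hp1 : p < 1) :
    Summable (fun l : ℕ => ∏ k ∈ Finset.Icc 1 l, (p + (1 - p) / 2 ^ k)) ∧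
    1 / (1 - p) ≤ (∑' l : ℕ, ∏ k ∈ Finset.Icc 1 l, (p + (1 - p) / 2 ^ k)) ∧
    (∑' l : ℕ, ∏ k ∈ Finset.Icc 1 l, (p + (1 - p) / 2 ^ k)) ≤ 2 / (1 - p) := by
  set r : ℝ := (1 + p) / 2 with hr
  have hr0 : 0 ≤ r := by positivity
  have hr1 : r < 1 := by rw [hr]; linarith
  have hfac_nonneg : ∀ k : ℕ, 0 ≤ p + (1 - p) / 2 ^ k := by
    intro k
    have : (0:ℝ) ≤ (1 - p) / 2 ^ k := div_nonneg (by linarith) (by positivity)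
    linarith
  have hfac_le : ∀ k ∈ Finset.Icc 1 (0 : ℕ), True := fun _ _ => trivial
  have hub : ∀ l : ℕ, (∏ k ∈ Finset.Icc 1 l, (p + (1 - p) / 2 ^ k)) ≤ r ^ l := by
    intro l
    calc (∏ k ∈ Finset.Icc 1 l, (p + (1 - p) / 2 ^ k))
        ≤ ∏ k ∈ Finset.Icc 1 l, r := by
          apply Finset.prod_le_prod (fun k _ => hfac_nonneg k)
          intro k hk
          rw [Finset.mem_Icc] at hk
          have h2 : (2:ℝ) ≤ 2 ^ k := by
            calc (2:ℝ) = 2 ^ 1 := (pow_one 2).symm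
            _ ≤ 2 ^ k := pow_le_pow_right₀ (by norm_num) hk.1
          have hp' : (0:ℝ) < 1 - p := by linarith
          have : (1 - p) / 2 ^ k ≤ (1 - p) / 2 :=
            div_le_div_of_nonneg_left (le_of_lt hp') (by norm_num) h2
          rw [hr]; linarith
      _ = r ^ l := by rw [Finset.prod_const, Nat.card_Icc]; norm_num
  have hlb : ∀ l : ℕ, p ^ l ≤ ∏ k ∈ Finset.Icc 1 l, (p + (1 - p) / 2 ^ k) := by
    intro l
    calc p ^ l = ∏ k ∈ Finset.Icc 1 l, p := by
          rw [Finset.prod_const, Nat.card_Icc]; norm_num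
      _ ≤ _ := by
          apply Finset.prod_le_prod (fun _ _ => hp0)
          intro k _
          have : (0:ℝ) ≤ (1 - p) / 2 ^ k := div_nonneg (by linarith) (by positivity)
          linarith
  have hprod_nonneg : ∀ l : ℕ, 0 ≤ ∏ k ∈ Finset.Icc 1 l, (p + (1 - p) / 2 ^ k) :=
    fun l => Finset.prod_nonneg (fun k _ => hfac_nonneg k)
  have hgeo : Summable (fun l : ℕ => r ^ l) := summable_geometric_of_lt_one hr0 hr1
  have hgeop : Summable (fun l : ℕ => p ^ l) := summable_geometric_of_lt_one hp0 hp1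
  have hsum : Summable (fun l : ℕ => ∏ k ∈ Finset.Icc 1 l, (p + (1 - p) / 2 ^ k)) :=
    Summable.of_nonneg_of_le hprod_nonneg hub hgeo
  refine ⟨hsum, ?_, ?_⟩
  · calc 1 / (1 - p) = ∑' l : ℕ, p ^ l := by
          rw [tsum_geometric_of_lt_one hp0 hp1, one_div]
      _ ≤ _ := Summable.tsum_le_tsum hlb hgeop hsum
  · calc (∑' l : ℕ, ∏ k ∈ Finset.Icc 1 l, (p + (1 - p) / 2 ^ k))
        ≤ ∑' l : ℕ, r ^ l := Summable.tsum_le_tsum hub hsum hgeo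
      _ = 2 / (1 - p) := by
          rw [tsum_geometric_of_lt_one hr0 hr1, hr]
          rw [inv_eq_one_div]
          rw [show (1:ℝ) - (1 + p) / 2 = (1 - p) / 2 by ring]
          rw [one_div_div]
end

section
/- Fix 0 ≤ p < 1 and let T_p = Σ_{l=1}^{∞} Π_{k=1}^{l−1} (p + (1−p)/2^k). Then (1.6396 − 0.6425·p)/(1−p) ≤ T_p ≤ (1.7096 − 0.6425·p)/(1−p). -/
open Finset

set_option maxHeartbeats 1000000 in
theorem stmt_9 (p : ℝ) (hp0 : 0 ≤ p) (hp1 : p < 1) :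
    (1.6396 - 0.6425 * p) / (1 - p) ≤
      (∑' l : ℕ, ∏ k ∈ Finset.Icc 1 l, (p + (1 - p) / 2 ^ k)) ∧
    (∑' l : ℕ, ∏ k ∈ Finset.Icc 1 l, (p + (1 - p) / 2 ^ k)) ≤
      (1.7096 - 0.6425 * p) / (1 - p) := by
  have hq : 0 < 1 - p := by linarith
  set f : ℕ → ℝ := fun l => ∏ k ∈ Finset.Icc 1 l, (p + (1 - p) / 2 ^ k) with hf
  have hfac_pos : ∀ k : ℕ, 0 < p + (1 - p) / 2 ^ k := by
    intro k
    have h2 : (0:ℝ) < 2 ^ k := by positivity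
    have := div_pos hq h2
    linarith
  have hfpos : ∀ l, 0 < f l := fun l => Finset.prod_pos (fun k _ => hfac_pos k)
  have hstep : ∀ n : ℕ, f (n + 1) = f n * (p + (1 - p) / 2 ^ (n + 1)) := by
    intro n
    simp only [hf]
    exact Finset.prod_Icc_succ_top (Nat.le_add_left 1 n) _
  have e0 : f 0 = 1 := by simp [hf]
  have e1 : f 1 = f 0 * (p + (1 - p) / 2 ^ 1) := hstep 0
  have e2 : f 2 = f 1 * (p + (1 - p) / 2 ^ 2) := hstep 1
  have e3 : f 3 = f 2 * (p + (1 - p) / 2 ^ 3) := hstep 2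
  have e4 : f 4 = f 3 * (p + (1 - p) / 2 ^ 4) := hstep 3
  have e5 : f 5 = f 4 * (p + (1 - p) / 2 ^ 5) := hstep 4
  have e6 : f 6 = f 5 * (p + (1 - p) / 2 ^ 6) := hstep 5
  have e7 : f 7 = f 6 * (p + (1 - p) / 2 ^ 7) := hstep 6
  have e8 : f 8 = f 7 * (p + (1 - p) / 2 ^ 8) := hstep 7
  -- summability
  have hbound : ∀ l, f l ≤ ((1 + p) / 2) ^ l := by
    intro l
    induction l with
    | zero => simp [e0]
    | succ n ih =>
      rw [hstep n, pow_succ ((1 + p) / 2) n]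
      have h2 : (2:ℝ) ≤ 2 ^ (n + 1) := by
        calc (2:ℝ) = 2 ^ 1 := (pow_one 2).symm
        _ ≤ 2 ^ (n + 1) := by
          apply pow_le_pow_right₀ (by norm_num)
          omega
      have hdiv : (1 - p) / 2 ^ (n + 1) ≤ (1 - p) / 2 := by
        apply div_le_div_of_nonneg_left hq.le (by norm_num) h2
      have h1 : p + (1 - p) / 2 ^ (n + 1) ≤ (1 + p) / 2 := by linarith
      exact mul_le_mul ih h1 (hfac_pos _).le (pow_nonneg (by linarith) n)
  have hsum : Summable f :=
    Summable.of_nonneg_of_le (fun l => (hfpos l).le) hbound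
      (summable_geometric_of_lt_one (by linarith) (by linarith))
  have htail : Summable (fun l => f (l + 8)) := (summable_nat_add_iff 8).2 hsum
  -- tail lower bound
  have lower_tail : ∀ l, f 8 * p ^ l ≤ f (l + 8) := by
    intro l
    induction l with
    | zero => simp
    | succ n ih =>
      have hrw : f (n + 1 + 8) = f (n + 8) * (p + (1 - p) / 2 ^ (n + 8 + 1)) := hstep (n + 8)
      rw [hrw, pow_succ p n, ← mul_assoc]
      have hfac : p ≤ p + (1 - p) / 2 ^ (n + 8 + 1) := by
        have h2 : (0:ℝ) < 2 ^ (n + 8 + 1) := by positivity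
        have := div_pos hq h2
        linarith
      exact mul_le_mul ih hfac hp0 (hfpos _).le
  -- tail upper bound with ratio r
  set r : ℝ := p + (1 - p) / 512 with hr
  have hr0 : 0 ≤ r := by
    have := div_pos hq (by norm_num : (0:ℝ) < 512)
    simp only [hr]; linarith
  have hr1 : r < 1 := by
    simp only [hr]
    have : (1 - p) / 512 < 1 - p := by
      have := div_pos hq (by norm_num : (0:ℝ) < 512)
      linarith [div_lt_self hq (by norm_num : (1:ℝ) < 512)]
    linarith
  have upper_tail : ∀ l, f (l + 8) ≤ f 8 * r ^ l := by
    intro l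
    induction l with
    | zero => simp
    | succ n ih =>
      have hrw : f (n + 1 + 8) = f (n + 8) * (p + (1 - p) / 2 ^ (n + 8 + 1)) := hstep (n + 8)
      rw [hrw, pow_succ r n, ← mul_assoc]
      have h2 : (512:ℝ) ≤ 2 ^ (n + 8 + 1) := by
        calc (512:ℝ) = 2 ^ 9 := by norm_num
        _ ≤ 2 ^ (n + 8 + 1) := by
          apply pow_le_pow_right₀ (by norm_num)
          omega
      have hdiv : (1 - p) / 2 ^ (n + 8 + 1) ≤ (1 - p) / 512 := by
        apply div_le_div_of_nonneg_left hq.le (by norm_num) h2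
      have hfac : p + (1 - p) / 2 ^ (n + 8 + 1) ≤ r := by
        simp only [hr]; linarith
      exact mul_le_mul ih hfac (hfac_pos _).le (mul_nonneg (hfpos 8).le (pow_nonneg hr0 n))
  -- tsum bounds for the tail
  have tl_lower : f 8 * (1 - p)⁻¹ ≤ ∑' l, f (l + 8) := by
    have h1 : (∑' l : ℕ, f 8 * p ^ l) = f 8 * (1 - p)⁻¹ := by
      rw [tsum_mul_left, tsum_geometric_of_lt_one hp0 hp1]
    rw [← h1]
    exact Summable.tsum_le_tsum lower_tail
      ((summable_geometric_of_lt_one hp0 hp1).mul_left _) htail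
  have tl_upper : (∑' l, f (l + 8)) ≤ f 8 * (1 - r)⁻¹ := by
    have h1 : (∑' l : ℕ, f 8 * r ^ l) = f 8 * (1 - r)⁻¹ := by
      rw [tsum_mul_left, tsum_geometric_of_lt_one hr0 hr1]
    rw [← h1]
    exact Summable.tsum_le_tsum upper_tail htail
      ((summable_geometric_of_lt_one hr0 hr1).mul_left _)
  -- split the series
  have hsplit : (∑ i ∈ Finset.range 8, f i) + (∑' l, f (l + 8)) = ∑' l, f l :=
    Summable.sum_add_tsum_nat_add 8 hsum
  -- Bernstein-certificate helper
  have hb : ∀ i j : ℕ, 0 ≤ p ^ i * (1 - p) ^ j := fun i j =>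
    mul_nonneg (pow_nonneg hp0 i) (pow_nonneg hq.le j)
  -- explicit sum
  have hS : (∑ i ∈ Finset.range 8, f i) = f 0 + f 1 + f 2 + f 3 + f 4 + f 5 + f 6 + f 7 := by
    simp [Finset.sum_range_succ]
  -- polynomial bounds
  have polyL : 1.6396 - 0.6425 * p ≤ (∑ i ∈ Finset.range 8, f i) * (1 - p) + f 8 := by
    rw [hS, e8, e7, e6, e5, e4, e3, e2, e1, e0]
    linarith [hb 0 8, hb 1 7, hb 2 6, hb 3 5, hb 4 4, hb 5 3, hb 6 2, hb 7 1, hb 8 0]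
  have polyU : (∑ i ∈ Finset.range 8, f i) * (1 - p) + f 8 * (512 / 511) ≤ 1.7096 - 0.6425 * p := by
    rw [hS, e8, e7, e6, e5, e4, e3, e2, e1, e0]
    linarith [hb 0 25, hb 1 24, hb 2 23, hb 3 22, hb 4 21, hb 5 20, hb 6 19, hb 7 18,
      hb 8 17, hb 9 16, hb 10 15, hb 11 14, hb 12 13, hb 13 12, hb 14 11, hb 15 10,
      hb 16 9, hb 17 8, hb 18 7, hb 19 6, hb 20 5, hb 21 4, hb 22 3, hb 23 2, hb 24 1,
      hb 25 0]
  constructor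
  · rw [← hsplit, div_le_iff₀ hq]
    have hcomb := mul_le_mul_of_nonneg_right tl_lower hq.le
    have hcanc : f 8 * (1 - p)⁻¹ * (1 - p) = f 8 := by
      field_simp
    linarith [polyL, hcomb, hcanc]
  · rw [← hsplit, le_div_iff₀ hq]
    have hcomb := mul_le_mul_of_nonneg_right tl_upper hq.le
    have hcanc : f 8 * (1 - r)⁻¹ * (1 - p) = f 8 * (512 / 511) := by
      have h1r : 1 - r = (1 - p) * (511 / 512) := by simp only [hr]; ring
      rw [h1r, mul_inv]
      field_simp
    linarith [polyU, hcomb, hcanc]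
end

section
/- Fix 0 ≤ p ≤ 1. Let R : ℕ → ℝ satisfy R(0) = 0 and, for all n ≥ 1, R(n) = 1 + p·R(n−1) + (1−p)·Σ_{k=2}^{n} 2^{k−n−1}·R(k−1). Then for all n ≥ 1, R(n) ≥ (n+1)/2. -/
open Finset

lemma sum_geo_eq : ∀ n : ℕ, 1 ≤ n →
    ∑ k ∈ Finset.Icc 2 n, (1 / (2:ℝ) ^ (n + 1 - k)) * (k:ℝ) = (n:ℝ) - 1 := by
  intro n hn
  induction n, hn using Nat.le_induction with
  | base => simp
  | succ n hn ih =>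
    rw [Finset.sum_Icc_succ_top (by omega : 2 ≤ n + 1)]
    have h1 : ∀ k ∈ Finset.Icc 2 n, (1 / (2:ℝ) ^ (n + 1 + 1 - k)) * (k:ℝ)
        = (1/2) * ((1 / (2:ℝ) ^ (n + 1 - k)) * (k:ℝ)) := by
      intro k hk
      simp only [Finset.mem_Icc] at hk
      have h2 : n + 1 + 1 - k = (n + 1 - k) + 1 := by omega
      rw [h2, pow_succ]
      ring
    rw [Finset.sum_congr rfl h1, ← Finset.mul_sum, ih]
    have h3 : n + 1 + 1 - (n + 1) = 1 := by omega
    rw [h3]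
    push_cast
    ring

theorem stmt_10 (p : ℝ) (hp0 : 0 ≤ p) (hp1 : p ≤ 1) (R : ℕ → ℝ) (hR0 : R 0 = 0)
    (hrec : ∀ n : ℕ, 1 ≤ n →
      R n = 1 + p * R (n - 1) +
        (1 - p) * ∑ k ∈ Finset.Icc 2 n, (1 / (2 : ℝ) ^ (n + 1 - k)) * R (k - 1)) :
    ∀ n : ℕ, 1 ≤ n → R n ≥ ((n : ℝ) + 1) / 2 := by
  intro n
  induction n using Nat.strong_induction_on with
  | _ n ih =>
    intro hn
    rcases Nat.lt_or_ge n 2 with h2 | h2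
    · have hn1 : n = 1 := by omega
      subst hn1
      have h := hrec 1 le_rfl
      simp [hR0] at h
      rw [h]
      norm_num
    · have hrecn := hrec n (by omega)
      have hR1 : R (n - 1) ≥ (n:ℝ) / 2 := by
        have h := ih (n - 1) (by omega) (by omega)
        have hc : ((n - 1 : ℕ) : ℝ) = (n:ℝ) - 1 := by
          rw [Nat.cast_sub (by omega : 1 ≤ n)]; norm_num
        rw [hc] at h
        linarith
      have hsum : ∑ k ∈ Finset.Icc 2 n, (1 / (2:ℝ) ^ (n + 1 - k)) * ((k:ℝ)/2)
          ≤ ∑ k ∈ Finset.Icc 2 n, (1 / (2:ℝ) ^ (n + 1 - k)) * R (k - 1) := by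
        apply Finset.sum_le_sum
        intro k hk
        simp only [Finset.mem_Icc] at hk
        have hRk := ih (k - 1) (by omega) (by omega)
        have hc : ((k - 1 : ℕ) : ℝ) + 1 = (k:ℝ) := by
          rw [Nat.cast_sub (by omega : 1 ≤ k)]; ring
        rw [hc] at hRk
        have hpos : (0:ℝ) < 1 / (2:ℝ) ^ (n + 1 - k) := by positivity
        nlinarith
      have hsv : ∑ k ∈ Finset.Icc 2 n, (1 / (2:ℝ) ^ (n + 1 - k)) * ((k:ℝ)/2)
          = ((n:ℝ) - 1) / 2 := by
        have h1 : ∀ k ∈ Finset.Icc 2 n, (1 / (2:ℝ) ^ (n + 1 - k)) * ((k:ℝ)/2)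
            = (1/2) * ((1 / (2:ℝ) ^ (n + 1 - k)) * (k:ℝ)) := by
          intro k _; ring
        rw [Finset.sum_congr rfl h1, ← Finset.mul_sum, sum_geo_eq n (by omega)]
        ring
      set S := ∑ k ∈ Finset.Icc 2 n, (1 / (2:ℝ) ^ (n + 1 - k)) * R (k - 1) with hS
      have hSge : S ≥ ((n:ℝ) - 1) / 2 := by rw [← hsv]; exact hsum
      have hn1 : (1:ℝ) ≤ (n:ℝ) := by exact_mod_cast hn
      nlinarith [mul_nonneg hp0 (by linarith : R (n-1) - (n:ℝ)/2 ≥ 0),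
        mul_nonneg (by linarith : (0:ℝ) ≤ 1 - p) (by linarith : S - ((n:ℝ)-1)/2 ≥ 0)]
end

section
/- Let R : ℕ → ℝ satisfy R(0) = 0 and, for all n ≥ 1, R(n) = 1 + Σ_{k=2}^{n} 2^{k−n−1}·R(k−1). Then for all n ≥ 1, R(n) = (n+1)/2. -/
open Finset

lemma aux_sum_11 : ∀ n : ℕ, 1 ≤ n →
    ∑ k ∈ Finset.Icc 2 n, (1 / (2 : ℝ) ^ (n + 1 - k)) * (((k : ℝ)) / 2)
      = ((n : ℝ) - 1) / 2 := by
  intro n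
  induction n with
  | zero => omega
  | succ m ih =>
    intro _
    rcases Nat.eq_or_lt_of_le (Nat.one_le_iff_ne_zero.mpr (Nat.succ_ne_zero m)) with h | h
    · have hm0 : m = 0 := by omega
      subst hm0; norm_num
    · have hm : 1 ≤ m := Nat.lt_succ_iff.mp h
      rw [Finset.sum_Icc_succ_top (by omega : 2 ≤ m + 1)]
      have : ∀ k ∈ Finset.Icc 2 m,
          (1 / (2 : ℝ) ^ (m + 1 + 1 - k)) * (((k : ℝ)) / 2)
            = (1/2) * ((1 / (2 : ℝ) ^ (m + 1 - k)) * (((k : ℝ)) / 2)) := by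
        intro k hk
        have hk2 : k ≤ m := (Finset.mem_Icc.mp hk).2
        have : m + 1 + 1 - k = (m + 1 - k) + 1 := by omega
        rw [this, pow_succ]
        ring
      rw [Finset.sum_congr rfl this, ← Finset.mul_sum, ih hm]
      have : m + 1 + 1 - (m + 1) = 1 := by omega
      rw [this]
      push_cast
      ring

theorem stmt_11 (R : ℕ → ℝ) (hR0 : R 0 = 0)
    (hrec : ∀ n : ℕ, 1 ≤ n →
      R n = 1 + ∑ k ∈ Finset.Icc 2 n, (1 / (2 : ℝ) ^ (n + 1 - k)) * R (k - 1)) :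
    ∀ n : ℕ, 1 ≤ n → R n = ((n : ℝ) + 1) / 2 := by
  intro n
  induction n using Nat.strong_induction_on with
  | _ n ih =>
    intro hn
    rw [hrec n hn]
    have hs : ∀ k ∈ Finset.Icc 2 n,
        (1 / (2 : ℝ) ^ (n + 1 - k)) * R (k - 1)
          = (1 / (2 : ℝ) ^ (n + 1 - k)) * (((k : ℝ)) / 2) := by
      intro k hk
      obtain ⟨hk1, hk2⟩ := Finset.mem_Icc.mp hk
      have := ih (k - 1) (by omega) (by omega)
      rw [this]
      congr 1
      have : ((k - 1 : ℕ) : ℝ) = (k : ℝ) - 1 := by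
        push_cast [Nat.cast_sub (by omega : 1 ≤ k)]; ring
      rw [this]; ring
    rw [Finset.sum_congr rfl hs, aux_sum_11 n hn]
    ring
end
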